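/- arXiv:2605.18315 — 4 statements merged into one kernel-verified Lean document; each statement's English description precedes it below -/
import Mathlib

section
/- Define R(μ) = tr(Σ) − 2λ b(μ) + λ² a(μ) b(μ) where a(μ) = μᵀΣμ and b(μ) = μᵀΣ²μ, with λ > 0 and Σ symmetric positive definite with distinct eigenvalues σ₁ > ⋯ > σ_d > 0 and unit eigenvectors u₁,…,u_d. Then the set of critical points of R is exactly {0} ∪ {± u_j/√(λσ_j) : j = 1,…,d}. -/
/-! The gradient of `R` is `2λ((λa - 2)Σ²μ + λbΣμ)`. At a critical point `μ ≠ 0`, invertibility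
of `Σ` gives `(λa - 2)Σμ + λbμ = 0`, and `λa = 2` is impossible since it would force
`b = |Σμ|² = 0`, hence `a = 0`. So `μ` is an eigenvector of `Σ`, and by simplicity of the spectrum
`μ = c uⱼ`. Along that line the gradient is `4λσⱼ²c(λσⱼc² - 1) uⱼ`, which vanishes exactly for
`c = 0` and `c = ±1/√(λσⱼ)`. -/

open Matrix

namespace Matrix

variable {n R : Type*} [Fintype n]

theorem IsSymm.mulVec_dotProduct [CommSemiring R] {S : Matrix n n R} (hS : S.IsSymm)
    (x y : n → R) : S *ᵥ x ⬝ᵥ y = x ⬝ᵥ S *ᵥ y := by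
  rw [dotProduct_mulVec, ← mulVec_transpose, hS.eq]

theorem dotProduct_eq_zero_of_mulVec_eq_smul [CommRing R] [IsDomain R] {S : Matrix n n R}
    (hS : S.IsSymm) {x y : n → R} {a b : R} (hx : S *ᵥ x = a • x) (hy : S *ᵥ y = b • y)
    (hab : a ≠ b) : x ⬝ᵥ y = 0 := by
  have h : a * (x ⬝ᵥ y) = b * (x ⬝ᵥ y) := by
    rw [← smul_eq_mul, ← smul_dotProduct, ← hx, hS.mulVec_dotProduct, hy, dotProduct_smul,
      smul_eq_mul]
  exact (mul_eq_mul_right_iff.mp h).resolve_left hab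

theorem eq_sum_dotProduct_smul_of_orthonormal [CommRing R] [DecidableEq n] {u : n → n → R}
    (hu : ∀ i j, u i ⬝ᵥ u j = if i = j then 1 else 0) (x : n → R) :
    x = ∑ k, (u k ⬝ᵥ x) • u k := by
  have hU : of u * (of u)ᵀ = 1 := by
    ext i j
    simp [mul_apply, one_apply, ← hu, dotProduct]
  calc x = ((of u)ᵀ * of u) *ᵥ x := by rw [mul_eq_one_comm.mp hU, one_mulVec]
    _ = ∑ k, (u k ⬝ᵥ x) • u k := by
      rw [← mulVec_mulVec, mulVec_transpose, vecMul_eq_sum]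
      rfl

theorem dotProduct_eq_ite_of_mulVec_eq_smul [CommRing R] [IsDomain R] [DecidableEq n]
    {S : Matrix n n R} (hS : S.IsSymm) {σ : n → R} (hσ : Function.Injective σ) {u : n → n → R}
    (heig : ∀ j, S *ᵥ u j = σ j • u j) (hunit : ∀ j, u j ⬝ᵥ u j = 1) (i j : n) :
    u i ⬝ᵥ u j = if i = j then 1 else 0 := by
  split_ifs with h
  · rw [h, hunit]
  · exact dotProduct_eq_zero_of_mulVec_eq_smul hS (heig i) (heig j) (hσ.ne h)

theorem exists_eq_smul_of_mulVec_eq_smul [CommRing R] [IsDomain R] [DecidableEq n]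
    {S : Matrix n n R} (hS : S.IsSymm) {σ : n → R} (hσ : Function.Injective σ) {u : n → n → R}
    (heig : ∀ j, S *ᵥ u j = σ j • u j) (hu : ∀ i j, u i ⬝ᵥ u j = if i = j then 1 else 0)
    {x : n → R} {τ : R} (hx : S *ᵥ x = τ • x) (hx0 : x ≠ 0) : ∃ j, x = (u j ⬝ᵥ x) • u j := by
  have hexp := eq_sum_dotProduct_smul_of_orthonormal hu x
  have hcoord : ∀ k, u k ⬝ᵥ x ≠ 0 → σ k = τ := fun k hk => by
    by_contra h
    exact hk (dotProduct_eq_zero_of_mulVec_eq_smul hS (heig k) hx h)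
  obtain ⟨j, hj⟩ : ∃ j, u j ⬝ᵥ x ≠ 0 := by
    by_contra! h
    exact hx0 (hexp.trans (by simp [h]))
  refine ⟨j, hexp.trans (Finset.sum_eq_single j (fun k _ hk => ?_) (by simp))⟩
  by_contra h
  exact hk (hσ ((hcoord k (left_ne_zero_of_smul h)).trans (hcoord j hj).symm))

noncomputable def dotProductCLM (w : n → ℝ) : (n → ℝ) →L[ℝ] ℝ :=
  (dotProductBilin ℝ ℝ w).toContinuousLinearMap

@[simp] theorem dotProductCLM_apply (w v : n → ℝ) : dotProductCLM w v = w ⬝ᵥ v := rfl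

theorem dotProductCLM_eq_zero_iff {w : n → ℝ} : dotProductCLM w = 0 ↔ w = 0 := by
  refine ⟨fun h => dotProduct_self_eq_zero.mp ?_, fun h => ?_⟩
  · simpa using congr($h w)
  · ext v; simp [h]

theorem hasFDerivAt_dotProduct_mulVec_self (M : Matrix n n ℝ) (x : n → ℝ) :
    HasFDerivAt (fun y => y ⬝ᵥ M *ᵥ y) (dotProductCLM ((M + Mᵀ) *ᵥ x)) x := by
  have h := HasFDerivAt.fun_sum (u := Finset.univ) fun i _ =>
    (hasFDerivAt_apply i x).mul (dotProductCLM (M i)).hasFDerivAt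
  refine h.congr_fderiv ?_
  ext v
  simp only [_root_.sum_apply, _root_.add_apply, _root_.smul_apply, dotProductCLM_apply,
    ContinuousLinearMap.proj_apply, smul_eq_mul]
  rw [add_mulVec, add_dotProduct, mulVec_transpose, ← dotProduct_mulVec, Finset.sum_add_distrib,
    add_comm]
  rfl

end Matrix

section Risk

variable {n : Type*} [Fintype n] (S : Matrix n n ℝ) (l : ℝ)

def risk (x : n → ℝ) : ℝ :=
  S.trace - 2 * l * (x ⬝ᵥ ((S * S) *ᵥ x)) + l ^ 2 * (x ⬝ᵥ (S *ᵥ x)) * (x ⬝ᵥ ((S * S) *ᵥ x))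

def riskGrad (x : n → ℝ) : n → ℝ :=
  (2 * l) • ((l * (x ⬝ᵥ (S *ᵥ x)) - 2) • ((S * S) *ᵥ x) + (l * (x ⬝ᵥ ((S * S) *ᵥ x))) • (S *ᵥ x))

variable {S l}

theorem hasFDerivAt_risk (hS : S.IsSymm) (x : n → ℝ) :
    HasFDerivAt (risk S l) (dotProductCLM (riskGrad S l x)) x := by
  have hSS : (S * S).IsSymm := by rw [IsSymm, transpose_mul, hS.eq]
  have h := ((hasFDerivAt_const S.trace x).sub
    ((hasFDerivAt_dotProduct_mulVec_self (S * S) x).const_mul (2 * l))).add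
    (((hasFDerivAt_dotProduct_mulVec_self S x).const_mul (l ^ 2)).mul
      (hasFDerivAt_dotProduct_mulVec_self (S * S) x))
  refine h.congr_fderiv ?_
  ext v
  simp only [hS.eq, hSS.eq, riskGrad, _root_.add_apply, _root_.sub_apply, _root_.smul_apply,
    _root_.zero_apply, dotProductCLM_apply, smul_eq_mul, add_mulVec, smul_dotProduct,
    add_dotProduct]
  ring

theorem fderiv_risk_eq_zero_iff (hS : S.IsSymm) (x : n → ℝ) :
    fderiv ℝ (risk S l) x = 0 ↔ riskGrad S l x = 0 := by
  rw [(hasFDerivAt_risk hS x).fderiv, dotProductCLM_eq_zero_iff]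

theorem exists_mulVec_eq_smul_of_riskGrad_eq_zero (hS : S.PosDef) (hl : l ≠ 0) {x : n → ℝ}
    (hx : riskGrad S l x = 0) (hx0 : x ≠ 0) : ∃ τ : ℝ, S *ᵥ x = τ • x := by
  set a := x ⬝ᵥ (S *ᵥ x)
  set b := x ⬝ᵥ ((S * S) *ᵥ x)
  have hSymm : S.IsSymm := isHermitian_iff_isSymm.mp hS.isHermitian
  have hred : (l * a - 2) • ((S * S) *ᵥ x) + (l * b) • (S *ᵥ x) = 0 :=
    (smul_eq_zero.mp hx).resolve_left (by positivity)
  have hlin : (l * a - 2) • (S *ᵥ x) + (l * b) • x = 0 := by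
    classical
    refine mulVec_injective_of_isUnit hS.isUnit ?_
    rw [mulVec_zero, mulVec_add, mulVec_smul, mulVec_smul, mulVec_mulVec, hred]
  by_cases ha : l * a - 2 = 0
  · exfalso
    rw [ha, zero_smul, zero_add, smul_eq_zero, mul_eq_zero] at hlin
    have hb : b = 0 := (hlin.resolve_right hx0).resolve_left hl
    have hSx : S *ᵥ x = 0 := by
      refine dotProduct_self_eq_zero.mp ?_
      rw [hSymm.mulVec_dotProduct, mulVec_mulVec]
      exact hb
    simp [a, hSx] at ha
  · refine ⟨-(l * b) / (l * a - 2), ?_⟩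
    rw [div_eq_inv_mul, mul_smul, neg_smul, ← eq_neg_iff_add_eq_zero.mpr hlin, inv_smul_smul₀ ha]

theorem riskGrad_smul_of_mulVec_eq_smul {u : n → ℝ} {σ : ℝ} (hu : S *ᵥ u = σ • u)
    (hunit : u ⬝ᵥ u = 1) (c : ℝ) :
    riskGrad S l (c • u) = (4 * l * σ ^ 2 * c * (c ^ 2 * (l * σ) - 1)) • u := by
  have hSS : (S * S) *ᵥ u = σ ^ 2 • u := by rw [← mulVec_mulVec, hu, mulVec_smul, hu, smul_smul, sq]
  simp only [riskGrad, mulVec_smul, hu, hSS, smul_dotProduct, dotProduct_smul, hunit, smul_eq_mul,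
    smul_smul, ← add_smul]
  congr 1
  ring

theorem riskGrad_smul_eq_zero_iff (hl : 0 < l) {u : n → ℝ} {σ : ℝ} (hσ : 0 < σ)
    (hu : S *ᵥ u = σ • u) (hunit : u ⬝ᵥ u = 1) (c : ℝ) :
    riskGrad S l (c • u) = 0 ↔
      c = 0 ∨ c = (Real.sqrt (l * σ))⁻¹ ∨ c = -(Real.sqrt (l * σ))⁻¹ := by
  have hu0 : u ≠ 0 := by rintro rfl; simp at hunit
  rw [riskGrad_smul_of_mulVec_eq_smul hu hunit, smul_eq_zero, or_iff_left hu0, mul_eq_zero,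
    sub_eq_zero, ← sq_eq_sq_iff_eq_or_eq_neg, inv_pow, Real.sq_sqrt (by positivity),
    ← mul_eq_one_iff_eq_inv₀ (by positivity)]
  simp [hl.ne', hσ.ne']

theorem riskGrad_eq_zero_iff (hS : S.PosDef) (hl : 0 < l) {σ : n → ℝ} {u : n → n → ℝ}
    (hσpos : ∀ j, 0 < σ j) (hσ : Function.Injective σ) (heig : ∀ j, S *ᵥ u j = σ j • u j)
    (hunit : ∀ j, u j ⬝ᵥ u j = 1) (x : n → ℝ) :
    riskGrad S l x = 0 ↔
      x = 0 ∨ ∃ j, x = (Real.sqrt (l * σ j))⁻¹ • u j ∨ x = -((Real.sqrt (l * σ j))⁻¹ • u j) := by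
  classical
  have hSymm : S.IsSymm := isHermitian_iff_isSymm.mp hS.isHermitian
  have hcrit (j : n) (c : ℝ) := riskGrad_smul_eq_zero_iff hl (hσpos j) (heig j) (hunit j) c
  constructor
  · intro hx
    by_cases hx0 : x = 0
    · exact Or.inl hx0
    obtain ⟨τ, hτ⟩ := exists_mulVec_eq_smul_of_riskGrad_eq_zero hS hl.ne' hx hx0
    obtain ⟨j, hj⟩ := exists_eq_smul_of_mulVec_eq_smul hSymm hσ heig
      (dotProduct_eq_ite_of_mulVec_eq_smul hSymm hσ heig hunit) hτ hx0
    rw [hj] at hx ⊢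
    rcases (hcrit j _).mp hx with h | h | h
    · exact absurd (by rw [hj, h, zero_smul]) hx0
    · exact Or.inr ⟨j, Or.inl (by rw [h])⟩
    · exact Or.inr ⟨j, Or.inr (by rw [h, neg_smul])⟩
  · rintro (rfl | ⟨j, rfl | rfl⟩)
    · simp [riskGrad]
    · exact (hcrit j _).mpr (Or.inr (Or.inl rfl))
    · rw [← neg_smul]
      exact (hcrit j _).mpr (Or.inr (Or.inr rfl))

end Risk

theorem stmt_4 {d : ℕ}
    (S : Matrix (Fin d) (Fin d) ℝ) (hS : S.PosDef)
    (l : ℝ) (hl : 0 < l)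
    (σ : Fin d → ℝ) (u : Fin d → Fin d → ℝ)
    (hσpos : ∀ j, 0 < σ j) (hσanti : StrictAnti σ)
    (heig : ∀ j, S *ᵥ u j = σ j • u j)
    (hunit : ∀ j, u j ⬝ᵥ u j = 1)
    (R : (Fin d → ℝ) → ℝ)
    (hR : ∀ x, R x = S.trace - 2 * l * (x ⬝ᵥ ((S * S) *ᵥ x))
        + l ^ 2 * (x ⬝ᵥ (S *ᵥ x)) * (x ⬝ᵥ ((S * S) *ᵥ x))) :
    {μ : Fin d → ℝ | fderiv ℝ R μ = 0}
      = {0} ∪ ⋃ j, {(Real.sqrt (l * σ j))⁻¹ • u j,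
          -((Real.sqrt (l * σ j))⁻¹ • u j)} := by
  obtain rfl : R = risk S l := funext hR
  ext μ
  rw [Set.mem_ofPred_eq, fderiv_risk_eq_zero_iff (isHermitian_iff_isSymm.mp hS.isHermitian),
    riskGrad_eq_zero_iff hS hl hσpos hσanti.injective heig hunit]
  simp only [Set.mem_union, Set.mem_singleton_iff, Set.mem_iUnion, Set.mem_insert_iff]
end

section
/- With R(μ) = tr(Σ) − 2λ μᵀΣ²μ + λ²(μᵀΣμ)(μᵀΣ²μ), λ > 0, Σ symmetric positive definite with simple spectrum σ₁ > ⋯ > σ_d > 0 and unit eigenvectors u_j: at the critical point μ* = u_j/√(λσ_j), for any eigenvector w of Σ with eigenvalue τ ≠ σ_j one has ∇²R(μ*) w = 2λτ(σ_j − τ) w, and ∇²R(μ*) u_j = 8λσ_j² u_j. -/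
/-! With `B₁(x, y) = xᵀΣy` and `B₂(x, y) = xᵀΣ²y`, the second derivative of
`R = tr Σ - 2λ B₂(μ, μ) + λ² B₁(μ, μ) B₂(μ, μ)` is a sum of products of these forms. At
`μ* = u_j / √(λσ_j)` one has `λ B₁(μ*, μ*) = 1` and `λ B₂(μ*, μ*) = σ_j`. An eigenvector `w` for
`τ ≠ σ_j` is orthogonal to `u_j`, so the cross terms `B_i(μ*, w)` vanish and what is left is
`-4λτ² + 2λτσ_j + 2λτ² = 2λτ(σ_j - τ)`; along `u_j` all four terms survive and give
`-4λσ_j² + 12λσ_j² = 8λσ_j²`. -/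

open Matrix

section QuarticRisk

variable {E : Type*} [NormedAddCommGroup E] [NormedSpace ℝ E]

theorem ContinuousLinearMap.hasFDerivAt_apply_self_of_symm {B : E →L[ℝ] E →L[ℝ] ℝ}
    (hB : ∀ x y, B x y = B y x) (x : E) : HasFDerivAt (fun y => B y y) (2 • B x) x := by
  refine ((B.hasFDerivAt (x := x)).clm_apply (hasFDerivAt_id x)).congr_fderiv ?_
  ext z
  simp [two_smul, hB z x]

noncomputable def quarticRisk (c l : ℝ) (B₁ B₂ : E →L[ℝ] E →L[ℝ] ℝ) (x : E) : ℝ :=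
  c - 2 * l * B₂ x x + l ^ 2 * B₁ x x * B₂ x x

theorem fderiv_quarticRisk_apply (c l : ℝ) {B₁ B₂ : E →L[ℝ] E →L[ℝ] ℝ}
    (hB₁ : ∀ x y, B₁ x y = B₁ y x) (hB₂ : ∀ x y, B₂ x y = B₂ y x) (x z : E) :
    fderiv ℝ (quarticRisk c l B₁ B₂) x z =
      -4 * l * B₂ x z + 2 * l ^ 2 * (B₁ x z * B₂ x x + B₁ x x * B₂ x z) := by
  have hq₁ := B₁.hasFDerivAt_apply_self_of_symm hB₁ x
  have hq₂ := B₂.hasFDerivAt_apply_self_of_symm hB₂ x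
  have h : HasFDerivAt (quarticRisk c l B₁ B₂) _ x :=
    ((hasFDerivAt_const c x).sub (hq₂.const_mul (2 * l))).add ((hq₁.const_mul (l ^ 2)).mul hq₂)
  rw [h.fderiv]
  simp only [zero_sub, _root_.add_apply, _root_.neg_apply,
    _root_.smul_apply, nsmul_eq_mul, Nat.cast_ofNat, smul_eq_mul]
  ring

theorem fderiv_fderiv_quarticRisk_apply (c l : ℝ) {B₁ B₂ : E →L[ℝ] E →L[ℝ] ℝ}
    (hB₁ : ∀ x y, B₁ x y = B₁ y x) (hB₂ : ∀ x y, B₂ x y = B₂ y x) (μ w z : E) :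
    fderiv ℝ (fun x => fderiv ℝ (quarticRisk c l B₁ B₂) x z) μ w =
      -4 * l * B₂ w z + 2 * l ^ 2 * (B₁ w z * B₂ μ μ + 2 * B₁ μ z * B₂ μ w
        + 2 * B₁ μ w * B₂ μ z + B₁ μ μ * B₂ w z) := by
  simp_rw [fderiv_quarticRisk_apply c l hB₁ hB₂]
  have hl₁ := (B₁.flip z).hasFDerivAt (x := μ)
  have hl₂ := (B₂.flip z).hasFDerivAt (x := μ)
  have hq₁ := B₁.hasFDerivAt_apply_self_of_symm hB₁ μ
  have hq₂ := B₂.hasFDerivAt_apply_self_of_symm hB₂ μ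
  have h : HasFDerivAt
      (fun x => -4 * l * B₂ x z + 2 * l ^ 2 * (B₁ x z * B₂ x x + B₁ x x * B₂ x z)) _ μ :=
    (hl₂.const_mul (-4 * l)).add (((hl₁.mul hq₂).add (hq₁.mul hl₂)).const_mul (2 * l ^ 2))
  rw [h.fderiv]
  simp only [_root_.add_apply, _root_.smul_apply,
    ContinuousLinearMap.flip_apply, nsmul_eq_mul, Nat.cast_ofNat, smul_eq_mul]
  ring

end QuarticRisk

namespace Matrix

variable {n : Type*} [Fintype n]

noncomputable def toContinuousBilin (A : Matrix n n ℝ) : (n → ℝ) →L[ℝ] (n → ℝ) →L[ℝ] ℝ :=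
  LinearMap.toContinuousLinearMap <| LinearMap.toContinuousLinearMap.toLinearMap ∘ₗ
    LinearMap.mk₂ ℝ (fun x y => x ⬝ᵥ (A *ᵥ y)) (fun _ _ _ => add_dotProduct ..)
      (fun _ _ _ => smul_dotProduct ..) (fun _ _ _ => by rw [mulVec_add, dotProduct_add])
      (fun _ _ _ => by rw [mulVec_smul, dotProduct_smul])

@[simp] theorem toContinuousBilin_apply (A : Matrix n n ℝ) (x y : n → ℝ) :
    A.toContinuousBilin x y = x ⬝ᵥ (A *ᵥ y) :=
  rfl

theorem IsSymm.dotProduct_mulVec_eq {A : Matrix n n ℝ} (hA : A.IsSymm) (x y : n → ℝ) :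
    x ⬝ᵥ (A *ᵥ y) = (A *ᵥ x) ⬝ᵥ y := by
  rw [dotProduct_mulVec, ← mulVec_transpose, hA.eq]

theorem IsSymm.toContinuousBilin_comm {A : Matrix n n ℝ} (hA : A.IsSymm) (x y : n → ℝ) :
    A.toContinuousBilin x y = A.toContinuousBilin y x := by
  rw [toContinuousBilin_apply, toContinuousBilin_apply, hA.dotProduct_mulVec_eq, dotProduct_comm]

theorem IsSymm.dotProduct_eq_zero_of_mulVec_eq_smul {A : Matrix n n ℝ} (hA : A.IsSymm)
    {u w : n → ℝ} {a b : ℝ} (hu : A *ᵥ u = a • u) (hw : A *ᵥ w = b • w) (hab : a ≠ b) :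
    u ⬝ᵥ w = 0 := by
  have h : a * (u ⬝ᵥ w) = b * (u ⬝ᵥ w) := by
    rw [← smul_eq_mul, ← smul_dotProduct, ← hu, ← hA.dotProduct_mulVec_eq, hw, dotProduct_smul,
      smul_eq_mul]
  have h' : (a - b) * (u ⬝ᵥ w) = 0 := by rw [sub_mul, h, sub_self]
  exact (mul_eq_zero.mp h').resolve_left (sub_ne_zero.mpr hab)

end Matrix

theorem stmt_6_general {d : ℕ}
    (S : Matrix (Fin d) (Fin d) ℝ) (hS : S.PosDef)
    (l : ℝ) (hl : 0 < l)
    (σ : Fin d → ℝ) (u : Fin d → Fin d → ℝ)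
    (hσpos : ∀ j, 0 < σ j)
    (heig : ∀ j, S *ᵥ u j = σ j • u j)
    (hunit : ∀ j, u j ⬝ᵥ u j = 1)
    (R : (Fin d → ℝ) → ℝ)
    (hR : ∀ x, R x = S.trace - 2 * l * (x ⬝ᵥ ((S * S) *ᵥ x))
        + l ^ 2 * (x ⬝ᵥ (S *ᵥ x)) * (x ⬝ᵥ ((S * S) *ᵥ x)))
    (j : Fin d) :
    (∀ (w : Fin d → ℝ) (τ : ℝ), w ≠ 0 → S *ᵥ w = τ • w → τ ≠ σ j →
        ∀ z : Fin d → ℝ,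
          fderiv ℝ (fun x => fderiv ℝ R x z) ((Real.sqrt (l * σ j))⁻¹ • u j) w
            = 2 * l * τ * (σ j - τ) * (w ⬝ᵥ z))
    ∧ ∀ z : Fin d → ℝ,
        fderiv ℝ (fun x => fderiv ℝ R x z) ((Real.sqrt (l * σ j))⁻¹ • u j) (u j)
          = 8 * l * (σ j) ^ 2 * (u j ⬝ᵥ z) := by
  have hS₁ : S.IsSymm := isHermitian_iff_isSymm.mp hS.isHermitian
  have hS₂ : (S * S).IsSymm := by simpa [sq] using hS₁.pow 2
  obtain rfl : R = quarticRisk S.trace l S.toContinuousBilin (S * S).toContinuousBilin :=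
    funext fun x => by simp [hR, quarticRisk]
  set c := (√(l * σ j))⁻¹
  have hc : c ^ 2 * (l * σ j) = 1 := by
    rw [inv_pow, Real.sq_sqrt (mul_pos hl (hσpos j)).le, inv_mul_cancel₀ (mul_pos hl (hσpos j)).ne']
  -- Moving every `S` onto the left factor of each dot product lets the eigen-equations fire.
  simp only [fderiv_fderiv_quarticRisk_apply _ _ hS₁.toContinuousBilin_comm
    hS₂.toContinuousBilin_comm, toContinuousBilin_apply, hS₁.dotProduct_mulVec_eq,
    ← mulVec_mulVec, mulVec_smul, heig, smul_dotProduct, dotProduct_smul, hunit, smul_eq_mul]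
  refine ⟨fun w τ _ hw hτ z => ?_, fun z => ?_⟩
  · have huw : u j ⬝ᵥ w = 0 := hS₁.dotProduct_eq_zero_of_mulVec_eq_smul (heig j) hw hτ.symm
    simp only [hw, mulVec_smul, smul_dotProduct, huw, smul_eq_mul]
    linear_combination (2 * l * τ * (σ j + τ) * (w ⬝ᵥ z)) * hc
  · linear_combination (12 * l * σ j ^ 2 * (u j ⬝ᵥ z)) * hc

theorem stmt_6 {d : ℕ}
    (S : Matrix (Fin d) (Fin d) ℝ) (hS : S.PosDef)
    (l : ℝ) (hl : 0 < l)
    (σ : Fin d → ℝ) (u : Fin d → Fin d → ℝ)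
    (hσpos : ∀ j, 0 < σ j) (hσanti : StrictAnti σ)
    (heig : ∀ j, S *ᵥ u j = σ j • u j)
    (hunit : ∀ j, u j ⬝ᵥ u j = 1)
    (R : (Fin d → ℝ) → ℝ)
    (hR : ∀ x, R x = S.trace - 2 * l * (x ⬝ᵥ ((S * S) *ᵥ x))
        + l ^ 2 * (x ⬝ᵥ (S *ᵥ x)) * (x ⬝ᵥ ((S * S) *ᵥ x)))
    (j : Fin d) :
    (∀ (w : Fin d → ℝ) (τ : ℝ), w ≠ 0 → S *ᵥ w = τ • w → τ ≠ σ j →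
        ∀ z : Fin d → ℝ,
          fderiv ℝ (fun x => fderiv ℝ R x z) ((Real.sqrt (l * σ j))⁻¹ • u j) w
            = 2 * l * τ * (σ j - τ) * (w ⬝ᵥ z))
    ∧ ∀ z : Fin d → ℝ,
        fderiv ℝ (fun x => fderiv ℝ R x z) ((Real.sqrt (l * σ j))⁻¹ • u j) (u j)
          = 8 * l * (σ j) ^ 2 * (u j ⬝ᵥ z) :=
  stmt_6_general S hS l hl σ u hσpos heig hunit R hR j
end

section
/- With R(μ) = tr(Σ) − 2λ μᵀΣ²μ + λ²(μᵀΣμ)(μᵀΣ²μ) and Σ symmetric positive definite with largest eigenvalue σ₁ and unit eigenvector u₁, λ > 0: the points ± u₁/√(λσ₁) are global minimizers of R, and the minimum value of R equals tr(Σ) − σ₁. -/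
/-!
Write `a = μᵀΣμ` and `b = μᵀΣ²μ`, so that `R μ = tr Σ - 2λb + λ²ab`. Since the spectrum of `Σ`
lies in `[0, σ₁]`, the matrix `σ₁Σ - Σ²` is positive semidefinite, i.e. `0 ≤ b ≤ σ₁a`. For
`λa ≤ 2` this gives `λb(λa - 2) ≥ σ₁λa(λa - 2) = σ₁((λa - 1)² - 1) ≥ -σ₁`, and for `λa > 2` the
left side is nonnegative; hence `R ≥ tr Σ - σ₁`. At `±u₁/√(λσ₁)` one has `a = 1/λ`, `b = σ₁/λ`,
and the bound is attained.
-/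

open Matrix

theorem neg_le_sub_two_mul_add_sq_mul {σ l a b : ℝ} (hσ : 0 ≤ σ) (hl : 0 ≤ l) (hb : 0 ≤ b)
    (hba : b ≤ σ * a) : -σ ≤ -2 * l * b + l ^ 2 * a * b := by
  rcases le_or_gt (l * a) 2 with h | h
  · nlinarith [mul_nonneg (mul_nonneg hl (sub_nonneg.2 hba)) (sub_nonneg.2 h),
      mul_nonneg hσ (sq_nonneg (1 - l * a))]
  · nlinarith [mul_nonneg (mul_nonneg hl hb) (sub_nonneg.2 h.le)]

section Spectral

variable {n : Type*} [Fintype n] [DecidableEq n]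

theorem Matrix.IsHermitian.eigenvalues_le_of_forall_eigen_le {S : Matrix n n ℝ}
    (hS : S.IsHermitian) {σ : ℝ}
    (hmax : ∀ (τ : ℝ) (w : n → ℝ), w ≠ 0 → S *ᵥ w = τ • w → τ ≤ σ) (i : n) :
    hS.eigenvalues i ≤ σ :=
  hmax _ _ (by simpa using hS.eigenvectorBasis.orthonormal.ne_zero i)
    (hS.mulVec_eigenvectorBasis i)

open scoped MatrixOrder in
theorem Matrix.PosSemidef.dotProduct_mul_self_mulVec_le {S : Matrix n n ℝ} (hS : S.PosSemidef)
    {σ : ℝ} (hσ : ∀ i, hS.1.eigenvalues i ≤ σ) (x : n → ℝ) :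
    x ⬝ᵥ ((S * S) *ᵥ x) ≤ σ * (x ⬝ᵥ (S *ᵥ x)) := by
  have hcfc : σ • S - S * S = cfc (fun t : ℝ => σ * t - t * t) S := by
    rw [cfc_sub _ _ S, cfc_const_mul _ _ S, cfc_mul _ _ S, cfc_id' ℝ S]
  have hpsd : (σ • S - S * S).PosSemidef := by
    rw [← nonneg_iff_posSemidef, hcfc]
    refine cfc_nonneg fun t ht => ?_
    obtain ⟨i, rfl⟩ := hS.1.spectrum_real_eq_range_eigenvalues ▸ ht
    nlinarith [hS.eigenvalues_nonneg i, hσ i]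
  simpa [sub_mulVec, smul_mulVec, dotProduct_sub, dotProduct_smul]
    using hpsd.dotProduct_mulVec_nonneg x

end Spectral

theorem stmt_7 {d : ℕ}
    (S : Matrix (Fin d) (Fin d) ℝ) (hS : S.PosDef)
    (l : ℝ) (hl : 0 < l)
    (σ₁ : ℝ) (u₁ : Fin d → ℝ)
    (heig : S *ᵥ u₁ = σ₁ • u₁) (hu₁ : u₁ ⬝ᵥ u₁ = 1)
    (hmax : ∀ (τ : ℝ) (w : Fin d → ℝ), w ≠ 0 → S *ᵥ w = τ • w → τ ≤ σ₁)
    (R : (Fin d → ℝ) → ℝ)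
    (hR : ∀ x, R x = S.trace - 2 * l * (x ⬝ᵥ ((S * S) *ᵥ x))
        + l ^ 2 * (x ⬝ᵥ (S *ᵥ x)) * (x ⬝ᵥ ((S * S) *ᵥ x))) :
    (∀ μ : Fin d → ℝ, R ((Real.sqrt (l * σ₁))⁻¹ • u₁) ≤ R μ)
    ∧ (∀ μ : Fin d → ℝ, R (-((Real.sqrt (l * σ₁))⁻¹ • u₁)) ≤ R μ)
    ∧ R ((Real.sqrt (l * σ₁))⁻¹ • u₁) = S.trace - σ₁ := by
  have hu₁ne : u₁ ≠ 0 := by rintro rfl; simp at hu₁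
  have hσ₁ : 0 < σ₁ := by
    simpa [heig, hu₁] using hS.dotProduct_mulVec_pos hu₁ne
  have hlow (μ : Fin d → ℝ) : S.trace - σ₁ ≤ R μ := by
    have hb := (posSemidef_conjTranspose_mul_self S).dotProduct_mulVec_nonneg μ
    rw [hS.1.eq] at hb
    have hba := hS.posSemidef.dotProduct_mul_self_mulVec_le
      (hS.1.eigenvalues_le_of_forall_eigen_le hmax) μ
    rw [hR]
    linarith [neg_le_sub_two_mul_add_sq_mul hσ₁.le hl.le (by simpa using hb) hba]
  set c := (Real.sqrt (l * σ₁))⁻¹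
  have hc : c ^ 2 = (l * σ₁)⁻¹ := by
    rw [inv_pow, Real.sq_sqrt (mul_pos hl hσ₁).le]
  have hval : R (c • u₁) = S.trace - σ₁ := by
    simp only [hR, mulVec_smul, ← mulVec_mulVec, heig, smul_dotProduct, dotProduct_smul,
      smul_eq_mul, hu₁]
    field_simp
    rw [show c ^ 4 = (c ^ 2) ^ 2 by ring, hc]
    field_simp
    ring
  have heven : R (-(c • u₁)) = R (c • u₁) := by
    simp only [hR, mulVec_neg, dotProduct_neg, neg_dotProduct, neg_neg]
  exact ⟨fun μ => hval ▸ hlow μ, fun μ => heven ▸ hval ▸ hlow μ, hval⟩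
end

section
/- Let f: R^d → R be C² and let x* be a nondegenerate critical point (∇f(x*) = 0 and ∇²f(x*) invertible). Then there exist C > 0 and a neighborhood U of x* such that ‖∇f(x)‖ ≥ C |f(x) − f(x*)|^{1/2} for all x ∈ U. -/
/-!
Since the Hessian at `x*` is injective, `‖∇f x‖` is comparable to `‖x - x*‖` near `x*`.
In particular it is `O(‖x - x*‖)`, so by the mean value theorem
`f x - f x* = O(‖x - x*‖²)`; taking square roots, `√|f x - f x*| = O(‖x - x*‖) = O(‖∇f x‖)`.
-/

open Asymptotics Filter Metric Topology

theorem isBigO_sub_pow_succ_of_hasFDerivAt {E F : Type*} [NormedAddCommGroup E] [NormedSpace ℝ E]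
    [NormedAddCommGroup F] [NormedSpace ℝ F] {f : E → F} {f' : E → E →L[ℝ] F} {a : E} {n : ℕ}
    (hff' : ∀ᶠ x in 𝓝 a, HasFDerivAt f (f' x) x) (hf' : f' =O[𝓝 a] fun x ↦ ‖x - a‖ ^ n) :
    (fun x ↦ f x - f a) =O[𝓝 a] fun x ↦ ‖x - a‖ ^ (n + 1) := by
  obtain ⟨c, hc, hcf'⟩ := hf'.exists_pos
  obtain ⟨r, hr, hball⟩ := eventually_nhds_iff_ball.mp (hff'.and hcf'.bound)
  refine .of_bound c (eventually_of_mem (ball_mem_nhds a hr) fun x hx ↦ ?_)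
  have hsub : closedBall a ‖x - a‖ ⊆ ball a r :=
    closedBall_subset_ball (by rwa [← dist_eq_norm, ← mem_ball])
  have hbound : ∀ y ∈ closedBall a ‖x - a‖, ‖f' y‖ ≤ c * ‖x - a‖ ^ n := fun y hy ↦ by
    calc ‖f' y‖ ≤ c * ‖‖y - a‖ ^ n‖ := (hball y (hsub hy)).2
      _ ≤ c * ‖x - a‖ ^ n := by
        rw [norm_pow, norm_norm, ← dist_eq_norm]
        gcongr
        exact mem_closedBall.mp hy
  calc ‖f x - f a‖ ≤ c * ‖x - a‖ ^ n * ‖x - a‖ :=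
        (convex_closedBall a _).norm_image_sub_le_of_norm_hasFDerivWithin_le
          (fun y hy ↦ (hball y (hsub hy)).1.hasFDerivWithinAt) hbound
          (mem_closedBall_self (norm_nonneg _)) (by rw [mem_closedBall, dist_eq_norm])
    _ = c * ‖‖x - a‖ ^ (n + 1)‖ := by rw [norm_pow, norm_norm, pow_succ, mul_assoc]

theorem isBigO_sqrt_abs_of_isBigO_sq {α : Type*} {l : Filter α} {u v : α → ℝ}
    (h : u =O[l] fun x ↦ v x ^ 2) : (fun x ↦ √|u x|) =O[l] v := by
  obtain ⟨c, hc, hcuv⟩ := h.exists_pos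
  refine .of_bound √c (hcuv.bound.mono fun x hx ↦ ?_)
  calc ‖√|u x|‖ = √|u x| := Real.norm_of_nonneg (Real.sqrt_nonneg _)
    _ ≤ √(c * v x ^ 2) := Real.sqrt_le_sqrt (by simpa using hx)
    _ = √c * ‖v x‖ := by rw [Real.sqrt_mul hc.le, Real.sqrt_sq_eq_abs, Real.norm_eq_abs]

theorem stmt_9 {d : ℕ}
    (f : EuclideanSpace ℝ (Fin d) → ℝ) (hf : ContDiff ℝ 2 f)
    (xstar : EuclideanSpace ℝ (Fin d))
    (hcrit : fderiv ℝ f xstar = 0)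
    (hnd : Function.Bijective ⇑(fderiv ℝ (fderiv ℝ f) xstar)) :
    ∃ C > 0, ∃ U ∈ nhds xstar, ∀ x ∈ U,
      C * Real.sqrt |f x - f xstar| ≤ ‖fderiv ℝ f x‖ := by
  have hHess : HasFDerivAt (fderiv ℝ f) (fderiv ℝ (fderiv ℝ f) xstar) xstar :=
    ((hf.fderiv_right (m := 1) le_rfl).differentiable one_ne_zero xstar).hasFDerivAt
  have hgrad : (fderiv ℝ f) =Θ[𝓝 xstar] (· - xstar) := by
    simpa [hcrit] using hHess.isTheta_sub
      (LinearMap.isClosedEmbedding_of_injective (LinearMap.ker_eq_bot.mpr hnd.1)).isInducing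
  have hquad : (fun x ↦ f x - f xstar) =O[𝓝 xstar] fun x ↦ ‖x - xstar‖ ^ 2 :=
    isBigO_sub_pow_succ_of_hasFDerivAt
      (.of_forall fun x ↦ (hf.differentiable two_ne_zero x).hasFDerivAt)
      (by simpa using hgrad.isBigO.norm_right)
  obtain ⟨c, hc, hbound⟩ :=
    ((isBigO_sqrt_abs_of_isBigO_sq hquad).trans (hgrad.isBigO_symm.norm_left)).exists_pos
  refine ⟨c⁻¹, inv_pos.mpr hc, _, hbound.bound, fun x hx ↦ ?_⟩
  rw [inv_mul_le_iff₀ hc]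
  simpa [abs_of_nonneg (Real.sqrt_nonneg _)] using hx
end
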